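/- Let E ⊂ ℝ^{n+1} be closed n-dimensional ADR with Christ–David grid 𝔻(E), and suppose the cubes Q ∈ 𝒢₀ ⊂ 𝔻(E) each admit a hyperplane H_Q with sup_{x∈Δ_Q*} dist(x,H_Q) + sup_{y∈H_Q∩B_Q*} dist(y,E) < η₁ ℓ(Q), while the family S satisfies the unilateral graph approximation sup_{x∈Δ_Q*} dist(x, Γ_S) < η₁ ℓ(Q) for a Lipschitz graph Γ_S with constant ≤ η₁. Then for any Q ∈ S ∩ 𝒢₀ and η₁ ≪ K₁^{-1}, one has the bilateral bound sup_{y ∈ (1/2)B_Q* ∩ Γ_S} dist(y, E) < C K₁ η₁ ℓ(Q), where B_Q* = B(x_Q, K₁ ℓ(Q)), Δ_Q* = B_Q* ∩ E, and C is a dimensional constant. -/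

import Mathlib

/-
If `E` is `η₁ℓ`-close to the hyperplane `H` and conversely on `B(x_Q, K₁ℓ)`, and `E` is `η₁ℓ`-close
to the graph `Γ`, then the disc of radius `K₁ℓ/2` of `H` around a point `q` near `x_Q` is
`2η₁ℓ`-close to `Γ`. Chords of `Γ` are almost orthogonal to the vertical direction `e = v_last`
(`|⟪a - b, e⟫| ≤ η₁‖a - b‖`), so comparing them with chords of that disc shows that every direction
of `H` is `O(η₁)`-almost orthogonal to `e`; equivalently the normal `ν` is `O(η₁)`-close to `±e`.
Hence `Γ ∩ ½B_Q*` stays within `O(η₁K₁ℓ)` of `H`, and the orthogonal projection of a point of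
`Γ ∩ ½B_Q*` onto `H` lands in `B_Q*`, where `H` is `η₁ℓ`-close to `E`.
-/

open MeasureTheory Metric Set
open scoped ENNReal
noncomputable section

abbrev Euc (n : ℕ) := EuclideanSpace ℝ (Fin (n + 1))

/-- The Lipschitz graph determined by an orthonormal basis `v` of `ℝ^{n+1}` and a function
`φ`: points `Σ_j z_j v_j + φ(z) v_{last}`. -/
def LipGraph {n : ℕ} (v : Fin (n + 1) → Euc n)
    (φ : EuclideanSpace ℝ (Fin n) → ℝ) : Set (Euc n) :=
  {y | ∃ z : EuclideanSpace ℝ (Fin n),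
    y = (∑ j : Fin n, z j • v j.castSucc) + φ z • v (Fin.last n)}

/-- The affine hyperplane through `p` with unit normal `ν`. -/
def Hyperplane {n : ℕ} (p ν : Euc n) : Set (Euc n) :=
  {y | (inner ℝ (y - p) ν : ℝ) = 0}

open scoped RealInnerProductSpace

section FlatSets

variable {F : Type*} [NormedAddCommGroup F] [InnerProductSpace ℝ F]

def IsFlatAlong (S : Set F) (e : F) (η : ℝ) : Prop :=
  ∀ a ∈ S, ∀ b ∈ S, |⟪a - b, e⟫| ≤ η * ‖a - b‖

lemma IsFlatAlong.abs_inner_sub_le {S : Set F} {e : F} {η : ℝ} (hS : IsFlatAlong S e η)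
    (hη : 0 ≤ η) (he : ‖e‖ = 1) {x y a b : F} (ha : a ∈ S) (hb : b ∈ S) {εx εy : ℝ}
    (hxa : dist x a ≤ εx) (hyb : dist y b ≤ εy) :
    |⟪x - y, e⟫| ≤ η * ‖x - y‖ + (1 + η) * (εx + εy) := by
  rw [dist_eq_norm] at hxa hyb
  have herr : ‖(x - a) - (y - b)‖ ≤ εx + εy := (norm_sub_le _ _).trans (add_le_add hxa hyb)
  have hab : ‖a - b‖ ≤ ‖x - y‖ + (εx + εy) := by
    calc ‖a - b‖ = ‖(x - y) - ((x - a) - (y - b))‖ := by congr 1; abel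
      _ ≤ ‖x - y‖ + (εx + εy) := (norm_sub_le _ _).trans (by gcongr)
  calc |⟪x - y, e⟫| = |⟪a - b, e⟫ + ⟪(x - a) - (y - b), e⟫| := by
        rw [← inner_add_left]; congr 2; abel
    _ ≤ |⟪a - b, e⟫| + |⟪(x - a) - (y - b), e⟫| := abs_add_le _ _
    _ ≤ η * ‖a - b‖ + ‖(x - a) - (y - b)‖ := by
        gcongr
        · exact hS a ha b hb
        · simpa [he] using abs_real_inner_le_norm ((x - a) - (y - b)) e
    _ ≤ η * (‖x - y‖ + (εx + εy)) + (εx + εy) := by gcongr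
    _ = η * ‖x - y‖ + (1 + η) * (εx + εy) := by ring

lemma abs_inner_le_mul_norm_of_sphere {ν e : F} {r M : ℝ} (hr : 0 < r)
    (h : ∀ u, ⟪u, ν⟫ = 0 → ‖u‖ = r → |⟪u, e⟫| ≤ M) {u : F} (hu : ⟪u, ν⟫ = 0) :
    |⟪u, e⟫| ≤ M / r * ‖u‖ := by
  rcases eq_or_ne u 0 with rfl | hu0
  · simp
  have hn : 0 < ‖u‖ := norm_pos_iff.mpr hu0
  have hscaled := h ((r / ‖u‖) • u) (by rw [real_inner_smul_left, hu, mul_zero])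
    (by rw [norm_smul, Real.norm_of_nonneg (by positivity), div_mul_cancel₀ _ hn.ne'])
  rw [real_inner_smul_left, abs_mul, abs_of_pos (by positivity)] at hscaled
  rw [div_mul_eq_mul_div, le_div_iff₀ hr]
  calc |⟪u, e⟫| * r = r / ‖u‖ * |⟪u, e⟫| * ‖u‖ := by field_simp
    _ ≤ M * ‖u‖ := by gcongr

lemma abs_inner_le_of_forall_orthogonal {ν e : F} {δ : ℝ} (hν : ‖ν‖ = 1) (he : ‖e‖ = 1)
    (hδ : 0 ≤ δ) (h : ∀ u, ⟪u, ν⟫ = 0 → |⟪u, e⟫| ≤ δ * ‖u‖) (x : F) :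
    |⟪x, ν⟫| ≤ |⟪x, e⟫| + δ * ‖x‖ := by
  set c := ⟪e, ν⟫
  have hνν : ⟪ν, ν⟫ = 1 := by rw [real_inner_self_eq_norm_sq, hν, one_pow]
  have hee : ⟪e, e⟫ = 1 := by rw [real_inner_self_eq_norm_sq, he, one_pow]
  have hνe : ⟪ν, e⟫ = c := real_inner_comm e ν
  have horth : ⟪e - c • ν, ν⟫ = 0 := by
    rw [inner_sub_left, real_inner_smul_left, hνν]; ring
  -- Test against `e - cν`, which lies in `ν⊥`: its squared length `1 - c²` equals `⟪e - cν, e⟫`,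
  -- and it is also the squared length of `ν - ce`.
  have hsq₁ : ‖e - c • ν‖ ^ 2 = 1 - c ^ 2 := by
    rw [← real_inner_self_eq_norm_sq]
    simp only [inner_sub_left, inner_sub_right, real_inner_smul_left, real_inner_smul_right,
      hνν, hee, hνe]
    ring
  have hsq₂ : ‖ν - c • e‖ ^ 2 = 1 - c ^ 2 := by
    rw [← real_inner_self_eq_norm_sq]
    simp only [inner_sub_left, inner_sub_right, real_inner_smul_left, real_inner_smul_right,
      hνν, hee, hνe]
    ring
  have hproj : ⟪e - c • ν, e⟫ = 1 - c ^ 2 := by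
    rw [inner_sub_left, real_inner_smul_left, hee, hνe]; ring
  have hperp : ‖ν - c • e‖ ≤ δ := by
    have h₁ := h _ horth
    rw [hproj, ← hsq₁, abs_of_nonneg (sq_nonneg _)] at h₁
    have h₂ : ‖ν - c • e‖ = ‖e - c • ν‖ :=
      (pow_left_inj₀ (norm_nonneg _) (norm_nonneg _) two_ne_zero).1 (hsq₂.trans hsq₁.symm)
    rw [h₂]
    nlinarith [norm_nonneg (e - c • ν)]
  have hc1 : |c| ≤ 1 := by simpa [hν, he] using abs_real_inner_le_norm e ν
  calc |⟪x, ν⟫| = |c * ⟪x, e⟫ + ⟪x, ν - c • e⟫| := by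
        rw [inner_sub_right, real_inner_smul_right]; ring_nf
    _ ≤ |c| * |⟪x, e⟫| + ‖x‖ * ‖ν - c • e‖ :=
        (abs_add_le _ _).trans (by rw [abs_mul]; gcongr; exact abs_real_inner_le_norm _ _)
    _ ≤ 1 * |⟪x, e⟫| + ‖x‖ * δ := by gcongr
    _ = |⟪x, e⟫| + δ * ‖x‖ := by ring

lemma IsFlatAlong.abs_inner_sub_le_of_approx_disc {Γ : Set F} {e ν q y : F} {η ε r : ℝ}
    (hΓ : IsFlatAlong Γ e η) (hη : 0 ≤ η) (hε : 0 ≤ ε) (he : ‖e‖ = 1) (hν : ‖ν‖ = 1)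
    (hr : 0 < r) (hnear : ∀ u, ⟪u, ν⟫ = 0 → ‖u‖ ≤ r → ∃ γ ∈ Γ, dist (q + u) γ ≤ ε)
    (hy : y ∈ Γ) :
    |⟪y - q, ν⟫| ≤ (2 * η + 2 * (1 + η) * ε / r) * ‖y - q‖ + (1 + η) * ε := by
  obtain ⟨γ₀, hγ₀, hqγ₀⟩ := hnear 0 (inner_zero_left _) (by simpa using hr.le)
  rw [add_zero] at hqγ₀
  have hsphere : ∀ u, ⟪u, ν⟫ = 0 → ‖u‖ = r → |⟪u, e⟫| ≤ η * r + 2 * (1 + η) * ε := by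
    intro u hu hur
    obtain ⟨γ, hγ, hqγ⟩ := hnear u hu hur.le
    have := hΓ.abs_inner_sub_le hη he hγ hγ₀ hqγ hqγ₀
    rw [add_sub_cancel_left, hur] at this
    linarith
  have htilt := abs_inner_le_of_forall_orthogonal (δ := η + 2 * (1 + η) * ε / r) hν he
    (by positivity) (fun u hu => (abs_inner_le_mul_norm_of_sphere hr hsphere hu).trans_eq
      (by rw [add_div, mul_div_cancel_right₀ _ hr.ne'])) (y - q)
  have hflat := hΓ.abs_inner_sub_le hη he hy hγ₀ (dist_self y).le hqγ₀
  linarith [show (2 * η + 2 * (1 + η) * ε / r) * ‖y - q‖ =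
    η * ‖y - q‖ + (η + 2 * (1 + η) * ε / r) * ‖y - q‖ by ring]

end FlatSets

lemma exists_dist_lt_two_mul_of_chain {X : Type*} [PseudoMetricSpace X] {A B C : Set X} {x : X}
    {R ε : ℝ} (hε : 0 ≤ ε) (hAB : ∀ a ∈ A ∩ ball x R, infDist a B < ε)
    (hBC : ∀ b ∈ B ∩ ball x R, infDist b C < ε) (hB : B.Nonempty) (hC : C.Nonempty)
    {a : X} (ha : a ∈ A) (hax : dist a x < R - ε) : ∃ c ∈ C, dist a c < 2 * ε := by
  obtain ⟨b, hb, hab⟩ := (infDist_lt_iff hB).1 (hAB a ⟨ha, mem_ball.2 (by linarith)⟩)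
  have hbx : dist b x < R := by linarith [dist_triangle_left b x a]
  obtain ⟨c, hc, hbc⟩ := (infDist_lt_iff hC).1 (hBC b ⟨hb, mem_ball.2 hbx⟩)
  exact ⟨c, hc, by linarith [dist_triangle a b c]⟩

lemma Orthonormal.norm_sum_smul {F ι : Type*} [NormedAddCommGroup F] [InnerProductSpace ℝ F]
    [Fintype ι] {w : ι → F} (hw : Orthonormal ℝ w) (u : EuclideanSpace ℝ ι) :
    ‖∑ i, u i • w i‖ = ‖u‖ := by
  rw [← sq_eq_sq₀ (norm_nonneg _) (norm_nonneg _), ← real_inner_self_eq_norm_sq, hw.inner_sum,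
    EuclideanSpace.norm_sq_eq]
  simp [sq]

lemma isFlatAlong_lipGraph {n : ℕ} {v : Fin (n + 1) → Euc n}
    {φ : EuclideanSpace ℝ (Fin n) → ℝ} {η : ℝ} (hη : 0 ≤ η) (hv : Orthonormal ℝ v)
    (hφ : LipschitzWith (Real.toNNReal η) φ) : IsFlatAlong (LipGraph v φ) (v (Fin.last n)) η := by
  rintro _ ⟨z, rfl⟩ _ ⟨w, rfl⟩
  set L : EuclideanSpace ℝ (Fin n) → Euc n := fun u => ∑ j, u j • v j.castSucc
  set e := v (Fin.last n)
  have hdiff : (L z + φ z • e) - (L w + φ w • e) = L (z - w) + (φ z - φ w) • e := by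
    simp only [L, PiLp.sub_apply, sub_smul, Finset.sum_sub_distrib]
    abel
  have hLe : ∀ u, ⟪L u, e⟫ = 0 := fun u => by
    simp only [L, sum_inner, real_inner_smul_left]
    exact Finset.sum_eq_zero fun j _ => by rw [hv.inner_eq_zero (Fin.castSucc_ne_last j), mul_zero]
  have hee : ⟪e, e⟫ = 1 := by rw [real_inner_self_eq_norm_sq, hv.1, one_pow]
  have hinner : ⟪L (z - w) + (φ z - φ w) • e, e⟫ = φ z - φ w := by
    rw [inner_add_left, hLe, real_inner_smul_left, hee]; ring
  have hnorm : ‖z - w‖ ≤ ‖L (z - w) + (φ z - φ w) • e‖ := by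
    have hpyth := norm_add_sq_eq_norm_sq_add_norm_sq_real
      (by rw [real_inner_smul_right, hLe, mul_zero] : ⟪L (z - w), (φ z - φ w) • e⟫ = 0)
    have hL : ‖L (z - w)‖ = ‖z - w‖ := (hv.comp _ (Fin.castSucc_injective n)).norm_sum_smul _
    rw [← hL]
    nlinarith [norm_nonneg (L (z - w)), norm_nonneg (L (z - w) + (φ z - φ w) • e),
      mul_self_nonneg ‖(φ z - φ w) • e‖]
  have hlip : |φ z - φ w| ≤ η * ‖z - w‖ := by
    simpa [Real.dist_eq, dist_eq_norm, Real.coe_toNNReal η hη] using hφ.dist_le_mul z w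
  rw [hdiff, hinner]
  exact hlip.trans (by gcongr)

section Hyperplane

variable {n : ℕ} {p ν q : Euc n}

lemma add_mem_hyperplane {u : Euc n} (hq : q ∈ Hyperplane p ν) (hu : ⟪u, ν⟫ = 0) :
    q + u ∈ Hyperplane p ν := by
  change ⟪q + u - p, ν⟫ = 0
  rw [add_sub_right_comm, inner_add_left, hq, hu, add_zero]

lemma infDist_lt_of_dist_add_abs_inner_lt {E : Set (Euc n)} {x y : Euc n} {R ε : ℝ}
    (hν : ‖ν‖ = 1) (hq : q ∈ Hyperplane p ν)
    (hHE : ∀ h ∈ Hyperplane p ν ∩ ball x R, infDist h E < ε)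
    (hy : dist y x + |⟪y - q, ν⟫| < R) : infDist y E < |⟪y - q, ν⟫| + ε := by
  set s := ⟪y - q, ν⟫
  have hνν : ⟪ν, ν⟫ = 1 := by rw [real_inner_self_eq_norm_sq, hν, one_pow]
  have hproj : y - s • ν ∈ Hyperplane p ν := by
    change ⟪y - s • ν - p, ν⟫ = 0
    have hqp : ⟪q - p, ν⟫ = 0 := hq
    rw [show y - s • ν - p = (y - q) + (q - p) - s • ν by abel, inner_sub_left, inner_add_left,
      hqp, real_inner_smul_left, hνν]
    ring
  have hdist : dist y (y - s • ν) = |s| := by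
    rw [dist_eq_norm, sub_sub_cancel, norm_smul, hν, mul_one, Real.norm_eq_abs]
  have hball : y - s • ν ∈ ball x R := mem_ball.2 <| by
    linarith [dist_triangle_left (y - s • ν) x y]
  calc infDist y E ≤ infDist (y - s • ν) E + dist y (y - s • ν) := infDist_le_infDist_add_dist
    _ < ε + |s| := by rw [hdist]; linarith [hHE _ ⟨hproj, hball⟩]
    _ = |s| + ε := add_comm _ _

end Hyperplane

/-- Key bilateral claim: if every point of `E ∩ B(x_Q, K₁ℓ)` is `η₁ℓ`-close to a hyperplane
`H_Q`, every point of `H_Q ∩ B(x_Q, K₁ℓ)` is `η₁ℓ`-close to `E`, and every point of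
`E ∩ B(x_Q, K₁ℓ)` is `η₁ℓ`-close to a Lipschitz graph `Γ_S` with constant `≤ η₁`, then for
`η₁ ≪ K₁⁻¹` every point of `Γ_S ∩ (1/2)B(x_Q,K₁ℓ)` is `C K₁ η₁ ℓ`-close to `E`, with `C`
dimensional. -/
theorem statement19 (n : ℕ) :
    ∃ C : ℝ, 0 < C ∧ ∃ ε₀ : ℝ, 0 < ε₀ ∧
      ∀ (E : Set (Euc n)) (xQ : Euc n) (ℓ K₁ η₁ : ℝ)
        (v : Fin (n + 1) → Euc n) (φ : EuclideanSpace ℝ (Fin n) → ℝ) (p ν : Euc n),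
        IsClosed E → xQ ∈ E → 0 < ℓ → 1 ≤ K₁ → 0 < η₁ → η₁ * K₁ ≤ ε₀ →
        Orthonormal ℝ v → LipschitzWith (Real.toNNReal η₁) φ → ‖ν‖ = 1 →
        (∀ x ∈ E ∩ Metric.ball xQ (K₁ * ℓ),
          Metric.infDist x (Hyperplane p ν) < η₁ * ℓ) →
        (∀ y ∈ Hyperplane p ν ∩ Metric.ball xQ (K₁ * ℓ),
          Metric.infDist y E < η₁ * ℓ) →
        (∀ x ∈ E ∩ Metric.ball xQ (K₁ * ℓ),
          Metric.infDist x (LipGraph v φ) < η₁ * ℓ) →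
        ∀ y ∈ LipGraph v φ ∩ Metric.ball xQ (K₁ * ℓ / 2),
          Metric.infDist y E < C * K₁ * η₁ * ℓ := by
  refine ⟨23, by norm_num, 1 / 80, by norm_num, ?_⟩
  intro E xQ ℓ K η v φ p ν _ hxQ hℓ hK hη hηK hv hφ hν hEH hHE hEΓ y ⟨hyΓ, hy⟩
  have hη1 : η ≤ 1 / 80 := by nlinarith
  have hηℓ : 0 < η * ℓ := by positivity
  have hηKℓ : η * ℓ ≤ K * ℓ / 80 := by nlinarith
  have hΓ := isFlatAlong_lipGraph hη.le hv hφ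
  obtain ⟨q, hqH, hxq⟩ := (infDist_lt_iff ⟨p, by simp [Hyperplane]⟩).1
    (hEH xQ ⟨hxQ, mem_ball_self (by positivity)⟩)
  have hnear : ∀ u, ⟪u, ν⟫ = 0 → ‖u‖ ≤ K * ℓ / 2 →
      ∃ γ ∈ LipGraph v φ, dist (q + u) γ ≤ 2 * (η * ℓ) := fun u hu hur => by
    obtain ⟨γ, hγ, hd⟩ := exists_dist_lt_two_mul_of_chain (by positivity) hHE hEΓ ⟨xQ, hxQ⟩
      ⟨_, 0, rfl⟩ (add_mem_hyperplane hqH hu) (by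
        rw [dist_comm] at hxq
        linarith [dist_triangle (q + u) q xQ, dist_self_add_left u q])
    exact ⟨γ, hγ, hd.le⟩
  have hδ : 2 * η + 2 * (1 + η) * (2 * (η * ℓ)) / (K * ℓ / 2) ≤ 18 * η := by
    have : 2 * (1 + η) * (2 * (η * ℓ)) / (K * ℓ / 2) ≤ 16 * η := by
      rw [div_le_iff₀ (by positivity)]
      nlinarith
    linarith
  have hyq : ‖y - q‖ ≤ K * ℓ := by
    rw [← dist_eq_norm]
    linarith [dist_triangle y xQ q, mem_ball.1 hy]
  have hs : |⟪y - q, ν⟫| ≤ 22 * η * K * ℓ := by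
    have h₁ : (2 * η + 2 * (1 + η) * (2 * (η * ℓ)) / (K * ℓ / 2)) * ‖y - q‖ ≤
        18 * η * (K * ℓ) := mul_le_mul hδ hyq (norm_nonneg _) (by positivity)
    nlinarith [hΓ.abs_inner_sub_le_of_approx_disc hη.le (by positivity) (hv.1 _) hν
      (by positivity) hnear hyΓ]
  calc infDist y E < |⟪y - q, ν⟫| + η * ℓ :=
        infDist_lt_of_dist_add_abs_inner_lt hν hqH hHE (by nlinarith [mem_ball.1 hy])
    _ ≤ 23 * K * η * ℓ := by nlinarith
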